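/- arXiv:1110.0025 — 3 statements merged into one kernel-verified Lean document; each statement's English description precedes it below -/
import Mathlib

section
/- If a VCG-based mechanism (k, p) for the combinatorial auction problem is truthful, then there exists an allocation algorithm k̂ that is maximal in its range at V (for every w ∈ V, g(w, k̂(w)) = max{ g(w, o) : o ∈ { k̂(w') : w' ∈ V } }) and satisfies g(v, k(v)) = g(v, k̂(v)) for every v ∈ V. -/
/-- A combinatorial-auction valuation: a real-valued function on bundles of items that
is zero on the empty bundle and monotone (hence nonnegative). -/
structure CAValuation (S : Type*) where
  val : Finset S → ℝ
  val_empty : val ∅ = 0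
  mono : ∀ s t : Finset S, s ⊆ t → val s ≤ val t

/-- An allocation: an `n`-tuple of pairwise disjoint bundles of items. -/
abbrev CAAllocation (S : Type*) (n : ℕ) : Type _ :=
  {f : Fin n → Finset S // ∀ i j : Fin n, i ≠ j → Disjoint (f i) (f j)}

/-- The total welfare of allocation `x` at valuation profile `v`. -/
def welfare {S : Type*} {n : ℕ} (v : Fin n → CAValuation S) (x : CAAllocation S n) : ℝ :=
  ∑ i, (v i).val (x.1 i)


/-!
Under VCG payments an agent's utility is the welfare measured with its true valuation, up to a
term it cannot influence, so truthfulness says that `k` never loses welfare, measured at the new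
profile, when a single agent changes its declaration.

Fix `v` and a large bonus `C`. Replace the agents one at a time by single-minded bidders who value
at `C` the bundle they currently receive. Each step raises the welfare of `k` by at least the bonus
minus the agent's old value. So at the fully pinned profile `k` reaches `welfare v (k v)` plus all
the bonuses, which for large `C` forces it to give every agent its pinned bundle; in particular
those bundles form an allocation `x`. Giving the agents the valuations `w` one at a time then keeps
`k` at least as good as `x`, so `welfare w x ≤ welfare w (k w)`. The pinned bundles depend on `C`,
but by pigeonhole one family occurs for arbitrarily large `C`, and it serves as `k̂ v` for every
`w` at once.
-/

open Finset Function

section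

variable {S : Type*} {n : ℕ}

namespace CAValuation

lemma val_nonneg (v : CAValuation S) (s : Finset S) : 0 ≤ v.val s :=
  v.val_empty ▸ v.mono ∅ s (empty_subset s)

lemma val_le_univ [Fintype S] (v : CAValuation S) (s : Finset S) : v.val s ≤ v.val univ :=
  v.mono s univ (subset_univ s)

def singleMinded [DecidableEq S] (T : Finset S) (C : ℕ) : CAValuation S where
  val s := if T.Nonempty ∧ T ⊆ s then (C : ℝ) else 0
  val_empty := if_neg fun h => h.1.ne_empty (subset_empty.1 h.2)
  mono s t hst := by
    by_cases hs : T.Nonempty ∧ T ⊆ s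
    · rw [if_pos hs, if_pos ⟨hs.1, hs.2.trans hst⟩]
    · rw [if_neg hs]
      split_ifs <;> positivity

variable [DecidableEq S] [Fintype S] {T s : Finset S}

lemma singleMinded_val_of_subset (C : ℕ) (h : T ⊆ s) :
    (singleMinded T C).val s = (singleMinded T C).val univ := by
  simp [singleMinded, h]

lemma singleMinded_val_add_le_of_not_subset (C : ℕ) (h : ¬ T ⊆ s) :
    (singleMinded T C).val s + C ≤ (singleMinded T C).val univ := by
  have hT : T.Nonempty := nonempty_iff_ne_empty.2 fun hT => h (hT ▸ empty_subset s)
  simp [singleMinded, h, hT]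

end CAValuation

open CAValuation

section Welfare

lemma welfare_nonneg (w : Fin n → CAValuation S) (x : CAAllocation S n) : 0 ≤ welfare w x :=
  sum_nonneg fun i _ => (w i).val_nonneg (x.1 i)

lemma welfare_update_eq_add_sum_erase (w : Fin n → CAValuation S) (i : Fin n) (q : CAValuation S)
    (x : CAAllocation S n) :
    welfare (update w i q) x = q.val (x.1 i) + ∑ j ∈ univ.erase i, (w j).val (x.1 j) := by
  rw [welfare, ← add_sum_erase _ _ (mem_univ i), update_self]
  congr 1
  exact sum_congr rfl fun j hj => by rw [update_of_ne (ne_of_mem_erase hj)]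

lemma welfare_update (w : Fin n → CAValuation S) (i : Fin n) (q : CAValuation S)
    (x : CAAllocation S n) :
    welfare (update w i q) x = welfare w x + q.val (x.1 i) - (w i).val (x.1 i) := by
  rw [welfare_update_eq_add_sum_erase, welfare, ← add_sum_erase _ _ (mem_univ i)]
  ring

variable [Fintype S]

lemma welfare_le_sum_val_univ (w : Fin n → CAValuation S) (x : CAAllocation S n) :
    welfare w x ≤ ∑ i, (w i).val univ :=
  sum_le_sum fun i _ => (w i).val_le_univ (x.1 i)

lemma welfare_add_le_sum_val_univ (w : Fin n → CAValuation S) (x : CAAllocation S n)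
    {a : Fin n} {c : ℝ} (ha : (w a).val (x.1 a) + c ≤ (w a).val univ) :
    welfare w x + c ≤ ∑ i, (w i).val univ := by
  rw [welfare, ← add_sum_erase _ _ (mem_univ a), ← add_sum_erase _ _ (mem_univ a)]
  have := sum_le_sum fun i (_ : i ∈ univ.erase a) => (w i).val_le_univ (x.1 i)
  linarith

lemma subset_of_sum_val_univ_lt [DecidableEq S] {u : Fin n → CAValuation S} {a : Fin n}
    {T : Finset S} {C : ℕ} (hu : u a = singleMinded T C) {x : CAAllocation S n}
    (h : ∑ i, (u i).val univ < welfare u x + C) : T ⊆ x.1 a := by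
  by_contra hsub
  have := welfare_add_le_sum_val_univ u x (a := a)
    (by rw [hu]; exact singleMinded_val_add_le_of_not_subset C hsub)
  linarith

end Welfare

def WelfareMonotone (k : (Fin n → CAValuation S) → CAAllocation S n) : Prop :=
  ∀ (z : Fin n → CAValuation S) (i : Fin n) (q : CAValuation S),
    welfare (update z i q) (k z) ≤ welfare (update z i q) (k (update z i q))

theorem welfareMonotone_of_truthful (k : (Fin n → CAValuation S) → CAAllocation S n)
    (p h : Fin n → (Fin n → CAValuation S) → ℝ)
    (hInd : ∀ (i : Fin n) (w w' : Fin n → CAValuation S),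
      (∀ j, j ≠ i → w j = w' j) → h i w = h i w')
    (hp : ∀ (i : Fin n) (w : Fin n → CAValuation S),
      p i w = (∑ j ∈ univ.erase i, (w j).val ((k w).1 j)) + h i w)
    (htruth : ∀ (i : Fin n) (v : CAValuation S) (w : Fin n → CAValuation S),
      v.val ((k (update w i v)).1 i) + p i (update w i v) ≥ v.val ((k w).1 i) + p i w) :
    WelfareMonotone k := by
  intro z i q
  have key := htruth i q z
  rw [hp, hp, hInd i (update z i q) z fun j hj => update_of_ne hj q z, ← add_assoc, ← add_assoc,
    ← welfare_update_eq_add_sum_erase, ← welfare_update_eq_add_sum_erase, update_idem] at key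
  linarith

def pinOn [DecidableEq S] (A : Finset (Fin n)) (T : Fin n → Finset S) (C : ℕ)
    (w : Fin n → CAValuation S) : Fin n → CAValuation S :=
  fun i => if i ∈ A then singleMinded (T i) C else w i

section pinOn

variable [DecidableEq S] {A : Finset (Fin n)} {T : Fin n → Finset S} {C : ℕ} {a : Fin n}

lemma pinOn_of_mem (w : Fin n → CAValuation S) (ha : a ∈ A) :
    pinOn A T C w a = singleMinded (T a) C :=
  if_pos ha

lemma pinOn_empty (w : Fin n → CAValuation S) : pinOn ∅ T C w = w := by
  ext1 i
  simp [pinOn]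

lemma pinOn_univ (w w' : Fin n → CAValuation S) : pinOn univ T C w = pinOn univ T C w' := by
  ext1 i
  simp [pinOn]

lemma pinOn_insert (w : Fin n → CAValuation S) (ha : a ∉ A) :
    pinOn (insert a A) T C w = update (pinOn A T C w) a (singleMinded (T a) C) := by
  ext1 i
  rcases eq_or_ne i a with rfl | hi
  · simp [pinOn]
  · simp [pinOn, hi]

lemma pinOn_update_of_notMem (w : Fin n → CAValuation S) (ha : a ∉ A) (s : Finset S) :
    pinOn A (update T a s) C w = pinOn A T C w := by
  ext1 i
  unfold pinOn
  split_ifs with hi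
  · rw [update_of_ne (ne_of_mem_of_not_mem hi ha)]
  · rfl

lemma pinOn_compl_insert (w : Fin n → CAValuation S) {B : Finset (Fin n)} (ha : a ∉ B) :
    pinOn (insert a B)ᶜ T C w = update (pinOn Bᶜ T C w) a (w a) := by
  ext1 i
  rcases eq_or_ne i a with rfl | hi
  · simp [pinOn]
  · simp [pinOn, hi]

lemma sum_val_univ_pinOn_le [Fintype S] (w : Fin n → CAValuation S) (x : CAAllocation S n) :
    ∑ i, (pinOn A x.1 C w i).val univ ≤ welfare (pinOn A x.1 C w) x + ∑ i, (w i).val univ := by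
  rw [welfare, ← sum_add_distrib]
  refine sum_le_sum fun i _ => ?_
  unfold pinOn
  split_ifs
  · rw [singleMinded_val_of_subset C subset_rfl]
    linarith [(w i).val_nonneg univ]
  · linarith [(w i).val_nonneg (x.1 i)]

end pinOn

namespace WelfareMonotone

variable {k : (Fin n → CAValuation S) → CAAllocation S n}

lemma le_welfare_update (hk : WelfareMonotone k) (z : Fin n → CAValuation S) (i : Fin n)
    (q : CAValuation S) :
    welfare z (k z) + q.val ((k z).1 i) - (z i).val ((k z).1 i) ≤
      welfare (update z i q) (k (update z i q)) := by
  rw [← welfare_update]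
  exact hk z i q

lemma welfare_update_le (hk : WelfareMonotone k) {u : Fin n → CAValuation S}
    {x : CAAllocation S n} {a : Fin n} (hu : welfare u x ≤ welfare u (k u))
    (hsub : x.1 a ⊆ (k u).1 a) (hval : (u a).val ((k u).1 a) ≤ (u a).val (x.1 a))
    (q : CAValuation S) :
    welfare (update u a q) x ≤ welfare (update u a q) (k (update u a q)) := by
  have := hk.le_welfare_update u a q
  have := q.mono _ _ hsub
  rw [welfare_update]
  linarith

variable [DecidableEq S] [Fintype S]

-- Agents of `A` are pinned one at a time, each to the bundle it receives at that moment.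
theorem exists_pinOn (hk : WelfareMonotone k) (v : Fin n → CAValuation S) (C : ℕ)
    (A : Finset (Fin n)) :
    ∃ T : Fin n → Finset S, welfare v (k v) + ∑ i ∈ A, (singleMinded (T i) C).val univ ≤
      welfare (pinOn A T C v) (k (pinOn A T C v)) + ∑ i ∈ A, (v i).val (T i) := by
  induction A using Finset.induction_on with
  | empty => exact ⟨fun _ => ∅, by simp [pinOn_empty]⟩
  | insert a A ha ih =>
    obtain ⟨T, hT⟩ := ih
    set u := pinOn A T C v
    refine ⟨update T a ((k u).1 a), ?_⟩
    have hstep := hk.le_welfare_update u a (singleMinded ((k u).1 a) C)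
    rw [singleMinded_val_of_subset C subset_rfl, show u a = v a from if_neg ha] at hstep
    have hA : ∀ f : Finset S → Fin n → ℝ,
        ∑ i ∈ A, f (update T a ((k u).1 a) i) i = ∑ i ∈ A, f (T i) i := fun f =>
      sum_congr rfl fun i hi => by rw [update_of_ne (ne_of_mem_of_not_mem hi ha)]
    rw [pinOn_insert v ha, pinOn_update_of_notMem v ha, sum_insert ha, sum_insert ha, update_self,
      hA fun s _ => (singleMinded s C).val univ, hA fun s i => (v i).val s]
    linarith

theorem welfare_le_of_pinOn (hk : WelfareMonotone k) (x : CAAllocation S n) {C : ℕ}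
    {w : Fin n → CAValuation S} (hC : ∑ i, (w i).val univ < C)
    (hbase : welfare (pinOn univ x.1 C w) x ≤ welfare (pinOn univ x.1 C w) (k (pinOn univ x.1 C w)))
    (B : Finset (Fin n)) :
    welfare (pinOn Bᶜ x.1 C w) x ≤ welfare (pinOn Bᶜ x.1 C w) (k (pinOn Bᶜ x.1 C w)) := by
  induction B using Finset.induction_on with
  | empty => simpa using hbase
  | insert a B ha ih =>
    set u := pinOn Bᶜ x.1 C w
    have hua : u a = singleMinded (x.1 a) C := pinOn_of_mem w (mem_compl.2 ha)
    have hsub : x.1 a ⊆ (k u).1 a := subset_of_sum_val_univ_lt hua <| by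
      linarith [sum_val_univ_pinOn_le (A := Bᶜ) (C := C) w x]
    rw [pinOn_compl_insert w ha]
    refine hk.welfare_update_le ih hsub ?_ (w a)
    rw [hua, singleMinded_val_of_subset C hsub, singleMinded_val_of_subset C subset_rfl]

theorem exists_dominated (hk : WelfareMonotone k) (v : Fin n → CAValuation S) :
    ∃ x : CAAllocation S n, welfare v x = welfare v (k v) ∧
      ∀ w, welfare w x ≤ welfare w (k w) := by
  choose T hT using fun C : ℕ => hk.exists_pinOn v C univ
  obtain ⟨T₀, hT₀⟩ := Finite.exists_infinite_fiber T
  have hlarge (b : ℝ) : ∃ C : ℕ, T C = T₀ ∧ b < C :=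
    ((Nat.frequently_atTop_iff_infinite.2 (Set.infinite_coe_iff.1 hT₀)).and_eventually
      (tendsto_natCast_atTop_atTop.eventually_gt_atTop b)).exists
  have hpinned {C : ℕ} (hCT : T C = T₀) (hC : ∑ i, (v i).val univ < C) (i : Fin n) :
      T₀ i ⊆ (k (pinOn univ T₀ C v)).1 i := by
    subst hCT
    refine subset_of_sum_val_univ_lt (pinOn_of_mem (C := C) v (mem_univ i)) ?_
    simp only [pinOn_of_mem v (mem_univ _)]
    have := sum_le_sum fun i (_ : i ∈ univ) => (v i).val_le_univ (T C i)
    have := welfare_nonneg v (k v)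
    linarith [hT C]
  obtain ⟨C₀, hC₀T, hC₀⟩ := hlarge (∑ i, (v i).val univ)
  let x : CAAllocation S n := ⟨T₀, fun i j hij =>
    ((k _).2 i j hij).mono (hpinned hC₀T hC₀ i) (hpinned hC₀T hC₀ j)⟩
  have hvx : welfare v (k v) ≤ welfare v x := by
    have hP := welfare_le_sum_val_univ (pinOn univ T₀ C₀ v) (k (pinOn univ T₀ C₀ v))
    simp only [pinOn_of_mem v (mem_univ _)] at hP
    have hchain := hT C₀
    rw [hC₀T] at hchain
    change _ ≤ ∑ i, (v i).val (T₀ i)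
    linarith
  have hdom (w : Fin n → CAValuation S) : welfare w x ≤ welfare w (k w) := by
    obtain ⟨C, hCT, hC⟩ := hlarge (∑ i, (v i).val univ + ∑ i, (w i).val univ)
    have hv := sum_nonneg fun i (_ : i ∈ univ) => (v i).val_nonneg univ
    have hw := sum_nonneg fun i (_ : i ∈ univ) => (w i).val_nonneg univ
    have hbase : welfare (pinOn univ x.1 C w) x =
        welfare (pinOn univ x.1 C w) (k (pinOn univ x.1 C w)) := by
      rw [pinOn_univ w v]
      refine sum_congr rfl fun i _ => ?_
      rw [pinOn_of_mem v (mem_univ i)]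
      rw [singleMinded_val_of_subset C subset_rfl,
        singleMinded_val_of_subset C (hpinned hCT (by linarith) i)]
    simpa [pinOn_empty] using hk.welfare_le_of_pinOn x (by linarith) hbase.le univ
  exact ⟨x, le_antisymm (hdom v) hvx, hdom⟩

end WelfareMonotone

end

theorem stmt_5_general {S : Type*} [DecidableEq S] [Fintype S]
    {n : ℕ}
    (k : (Fin n → CAValuation S) → CAAllocation S n)
    (p : Fin n → (Fin n → CAValuation S) → ℝ)
    (h : Fin n → (Fin n → CAValuation S) → ℝ)
    (hInd : ∀ (i : Fin n) (w w' : Fin n → CAValuation S),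
      (∀ j, j ≠ i → w j = w' j) → h i w = h i w')
    (hp : ∀ (i : Fin n) (w : Fin n → CAValuation S),
      p i w = (∑ j ∈ Finset.univ.erase i, (w j).val ((k w).1 j)) + h i w)
    (htruth : ∀ (i : Fin n) (v : CAValuation S) (w : Fin n → CAValuation S),
      v.val ((k (Function.update w i v)).1 i) + p i (Function.update w i v) ≥
        v.val ((k w).1 i) + p i w) :
    ∃ khat : (Fin n → CAValuation S) → CAAllocation S n,
      (∀ w : Fin n → CAValuation S,
        IsGreatest {r : ℝ | ∃ w' : Fin n → CAValuation S, r = welfare w (khat w')}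
          (welfare w (khat w))) ∧
      ∀ v : Fin n → CAValuation S, welfare v (k v) = welfare v (khat v) := by
  have hk := welfareMonotone_of_truthful k p h hInd hp htruth
  choose khat hkhat_eq hkhat_dom using hk.exists_dominated
  refine ⟨khat, fun w => ⟨⟨w, rfl⟩, ?_⟩, fun v => (hkhat_eq v).symm⟩
  rintro r ⟨w', rfl⟩
  rw [hkhat_eq]
  exact hkhat_dom w' w

/-- Corollary 1: if a VCG-based mechanism for the combinatorial auction
problem is truthful, then there is an allocation algorithm `k̂` that is maximal in its
range at `V` and yields the same welfare as `k` at every profile. -/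
theorem stmt_5 {S : Type*} [DecidableEq S] [Fintype S] [Nonempty S]
    {n : ℕ} (hn : 0 < n)
    (k : (Fin n → CAValuation S) → CAAllocation S n)
    (p : Fin n → (Fin n → CAValuation S) → ℝ)
    (h : Fin n → (Fin n → CAValuation S) → ℝ)
    (hInd : ∀ (i : Fin n) (w w' : Fin n → CAValuation S),
      (∀ j, j ≠ i → w j = w' j) → h i w = h i w')
    (hp : ∀ (i : Fin n) (w : Fin n → CAValuation S),
      p i w = (∑ j ∈ Finset.univ.erase i, (w j).val ((k w).1 j)) + h i w)
    (htruth : ∀ (i : Fin n) (v : CAValuation S) (w : Fin n → CAValuation S),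
      v.val ((k (Function.update w i v)).1 i) + p i (Function.update w i v) ≥
        v.val ((k w).1 i) + p i w) :
    ∃ khat : (Fin n → CAValuation S) → CAAllocation S n,
      (∀ w : Fin n → CAValuation S,
        IsGreatest {r : ℝ | ∃ w' : Fin n → CAValuation S, r = welfare w (khat w')}
          (welfare w (khat w))) ∧
      ∀ v : Fin n → CAValuation S, welfare v (k v) = welfare v (khat v) :=
  stmt_5_general k p h hInd hp htruth
end

section
/- In a CMAP, let v ∈ V, let y ∈ O satisfy g(v, y) = g_opt(v), and let z ∈ V satisfy z^i_j ≤ v^i_j for all i, j and z^i_j = v^i_j whenever y^i_j = 1. Then g(z, y) = g_opt(z). -/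
/-- The total welfare of output `x` at type profile `v` in a CMAP, where `u i vᵢ xᵢ` is
agent `i`'s valuation of its part `xᵢ` of the output at type `vᵢ`. -/
def cmapWelfare {n : ℕ} {m : Fin n → ℕ}
    (u : ∀ i, (Fin (m i) → ℝ) → (Fin (m i) → Bool) → ℝ)
    (v : ∀ i, Fin (m i) → ℝ) (x : ∀ i, Fin (m i) → Bool) : ℝ :=
  ∑ i, u i (v i) (x i)

/-- The profile `v[α]` (relative to output `x`): keep `vᵢⱼ` on coordinates with
`xᵢⱼ = 1` and replace all other coordinates by `α`. -/
def cmapForce {n : ℕ} {m : Fin n → ℕ}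
    (v : ∀ i, Fin (m i) → ℝ) (x : ∀ i, Fin (m i) → Bool) (α : ℝ) :
    ∀ i, Fin (m i) → ℝ :=
  fun i j => if x i j then v i j else α

/-!
Lowering the types off the support of `y` leaves the welfare of `y` unchanged (independence)
and can only lower the welfare of every other output (monotonicity), so `y` stays optimal.
-/

theorem Finset.eq_sup'_of_le_of_eq_sup' {ι α : Type*} [SemilatticeSup α] {s : Finset ι}
    (hs : s.Nonempty) {f g : ι → α} (hfg : f ≤ g) {y : ι} (hy : y ∈ s) (hfy : f y = g y)
    (hgy : g y = s.sup' hs g) : f y = s.sup' hs f :=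
  le_antisymm (s.le_sup' f hy) <| s.sup'_le hs f fun x hx =>
    calc f x ≤ g x := hfg x
      _ ≤ s.sup' hs g := s.le_sup' g hx
      _ = f y := by rw [hfy, hgy]

section Welfare

variable {n : ℕ} {m : Fin n → ℕ} {u : ∀ i, (Fin (m i) → ℝ) → (Fin (m i) → Bool) → ℝ}

theorem cmapWelfare_congr
    (hindep : ∀ (i : Fin n) (v w : Fin (m i) → ℝ) (x : Fin (m i) → Bool),
      (∀ j, x j = true → v j = w j) → u i v x = u i w x)
    {v w : ∀ i, Fin (m i) → ℝ} {x : ∀ i, Fin (m i) → Bool}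
    (h : ∀ i j, x i j = true → v i j = w i j) :
    cmapWelfare u v x = cmapWelfare u w x :=
  Finset.sum_congr rfl fun i _ => hindep i (v i) (w i) (x i) (h i)

theorem cmapWelfare_mono
    (hmono : ∀ (i : Fin n) (v w : Fin (m i) → ℝ) (x : Fin (m i) → Bool),
      w ≤ v → u i w x ≤ u i v x)
    {v w : ∀ i, Fin (m i) → ℝ} (hwv : w ≤ v) (x : ∀ i, Fin (m i) → Bool) :
    cmapWelfare u w x ≤ cmapWelfare u v x :=
  Finset.sum_le_sum fun i _ => hmono i (v i) (w i) (x i) (hwv i)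

end Welfare

theorem stmt_9_general {n : ℕ} (m : Fin n → ℕ)
    (O : Finset (∀ i, Fin (m i) → Bool)) (hO : O.Nonempty)
    (u : ∀ i, (Fin (m i) → ℝ) → (Fin (m i) → Bool) → ℝ)
    (hindep : ∀ (i : Fin n) (v w : Fin (m i) → ℝ) (x : Fin (m i) → Bool),
      (∀ j, x j = true → v j = w j) → u i v x = u i w x)
    (hmono : ∀ (i : Fin n) (v w : Fin (m i) → ℝ) (x : Fin (m i) → Bool),
      w ≤ v → u i w x ≤ u i v x)
    (v : ∀ i, Fin (m i) → ℝ)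
    (y : ∀ i, Fin (m i) → Bool) (hy : y ∈ O)
    (hyopt : cmapWelfare u v y = O.sup' hO (fun x => cmapWelfare u v x))
    (z : ∀ i, Fin (m i) → ℝ)
    (hzle : ∀ i, z i ≤ v i)
    (hzeq : ∀ (i : Fin n) (j : Fin (m i)), y i j = true → z i j = v i j) :
    cmapWelfare u z y = O.sup' hO (fun x => cmapWelfare u z x) :=
  O.eq_sup'_of_le_of_eq_sup' hO (cmapWelfare_mono hmono hzle) hy
    (cmapWelfare_congr hindep hzeq) hyopt

/-- in a CMAP, if `y` is an optimal output for `v` and `z ≤ v` agrees with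
`v` on all coordinates selected by `y`, then `y` is also optimal for `z`. -/
theorem stmt_9 {n : ℕ} (hn : 0 < n) (m : Fin n → ℕ)
    (Vsp : ∀ i, Set (Fin (m i) → ℝ))
    (hdown : ∀ (i : Fin n) (v w : Fin (m i) → ℝ), v ∈ Vsp i → w ≤ v → w ∈ Vsp i)
    (O : Finset (∀ i, Fin (m i) → Bool)) (hO : O.Nonempty)
    (u : ∀ i, (Fin (m i) → ℝ) → (Fin (m i) → Bool) → ℝ)
    (hindep : ∀ (i : Fin n) (v w : Fin (m i) → ℝ) (x : Fin (m i) → Bool),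
      (∀ j, x j = true → v j = w j) → u i v x = u i w x)
    (hmono : ∀ (i : Fin n) (v w : Fin (m i) → ℝ) (x : Fin (m i) → Bool),
      w ≤ v → u i w x ≤ u i v x)
    (v : ∀ i, Fin (m i) → ℝ) (hv : ∀ i, v i ∈ Vsp i)
    (y : ∀ i, Fin (m i) → Bool) (hy : y ∈ O)
    (hyopt : cmapWelfare u v y = O.sup' hO (fun x => cmapWelfare u v x))
    (z : ∀ i, Fin (m i) → ℝ) (hz : ∀ i, z i ∈ Vsp i)
    (hzle : ∀ i, z i ≤ v i)
    (hzeq : ∀ (i : Fin n) (j : Fin (m i)), y i j = true → z i j = v i j) :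
    cmapWelfare u z y = O.sup' hO (fun x => cmapWelfare u z x) :=
  stmt_9_general m O hO u hindep hmono v y hy hyopt z hzle hzeq
end

section
/- Consider the second chance-IR mechanism for the combinatorial auction problem: the second chance mechanism whose output algorithm is the lowest type closure k̃ of k and whose functions are h^i(w^{-i}, l^{-i}) = −g((0^i, w^{-i}), k((0^i, w^{-i}))). For every agent i with true valuation v^i, every declaration profile w with w^i = v^i, and every appeal profile l, agent i's utility v^i(ô^i) + p^i is nonnegative, where ô is the allocation chosen by the mechanism. -/
/-- The zero (lowest) valuation: value `0` for every bundle. -/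
def zeroVal (S : Type*) : CAValuation S :=
  ⟨fun _ => 0, rfl, fun _ _ _ => le_rfl⟩

theorem CAValuation.val_nonneg_s17 {S : Type*} (v : CAValuation S) (s : Finset S) : 0 ≤ v.val s :=
  v.val_empty ▸ v.mono ∅ s (Finset.empty_subset s)

theorem welfare_eq_add_sum_erase {S : Type*} {n : ℕ} (w : Fin n → CAValuation S)
    (x : CAAllocation S n) (i : Fin n) :
    welfare w x = (w i).val (x.1 i) + ∑ j ∈ Finset.univ.erase i, (w j).val (x.1 j) :=
  (Finset.add_sum_erase _ _ (Finset.mem_univ i)).symm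

theorem welfare_update_zeroVal_le {S : Type*} {n : ℕ} (w : Fin n → CAValuation S)
    (i : Fin n) (x : CAAllocation S n) :
    welfare (Function.update w i (zeroVal S)) x ≤ welfare w x := by
  refine Finset.sum_le_sum fun j _ => ?_
  rcases eq_or_ne j i with rfl | hj
  · simpa [zeroVal] using (w j).val_nonneg_s17 (x.1 j)
  · rw [Function.update_of_ne hj]

theorem stmt_17_general {S : Type*}
    {n : ℕ}
    (k ktil : (Fin n → CAValuation S) → CAAllocation S n)
    (hktil : ∀ w : Fin n → CAValuation S,
      (ktil w = k w ∨ ∃ i : Fin n, ktil w = k (Function.update w i (zeroVal S))) ∧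
      welfare w (k w) ≤ welfare w (ktil w) ∧
      ∀ i : Fin n,
        welfare w (k (Function.update w i (zeroVal S))) ≤ welfare w (ktil w))
    (i : Fin n) (vi : CAValuation S)
    (w : Fin n → CAValuation S) (hw : w i = vi)
    (l : Fin n → (Fin n → CAValuation S) → Option (Fin n → CAValuation S))
    (ohat : CAAllocation S n)
    (hmax : ∀ o : CAAllocation S n,
      (o = ktil w ∨
        ∃ (j : Fin n) (w' : Fin n → CAValuation S), l j w = some w' ∧ o = ktil w') →
      welfare w o ≤ welfare w ohat) :
    vi.val (ohat.1 i) +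
      ((∑ j ∈ Finset.univ.erase i, (w j).val (ohat.1 j)) +
        -(welfare (Function.update w i (zeroVal S))
            (k (Function.update w i (zeroVal S))))) ≥ 0 := by
  set w₀ := Function.update w i (zeroVal S)
  have h_ohat : welfare w (ktil w) ≤ welfare w ohat := hmax _ (Or.inl rfl)
  have h_ktil : welfare w (k w₀) ≤ welfare w (ktil w) := (hktil w).2.2 i
  have h_zero : welfare w₀ (k w₀) ≤ welfare w (k w₀) := welfare_update_zeroVal_le w i _
  rw [welfare_eq_add_sum_erase w ohat i, hw] at h_ohat
  linarith

/-- the second chance-IR mechanism (the second chance mechanism based on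
the lowest type closure `k̃` of `k`, with `hⁱ(w⁻ⁱ, l⁻ⁱ) = −g((0ⁱ, w⁻ⁱ), k((0ⁱ, w⁻ⁱ)))`)
satisfies individual rationality: a truthful agent's utility is nonnegative. -/
theorem stmt_17 {S : Type*} [DecidableEq S] [Fintype S] [Nonempty S]
    {n : ℕ} (hn : 0 < n)
    (k ktil : (Fin n → CAValuation S) → CAAllocation S n)
    (hktil : ∀ w : Fin n → CAValuation S,
      (ktil w = k w ∨ ∃ i : Fin n, ktil w = k (Function.update w i (zeroVal S))) ∧
      welfare w (k w) ≤ welfare w (ktil w) ∧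
      ∀ i : Fin n,
        welfare w (k (Function.update w i (zeroVal S))) ≤ welfare w (ktil w))
    (i : Fin n) (vi : CAValuation S)
    (w : Fin n → CAValuation S) (hw : w i = vi)
    (l : Fin n → (Fin n → CAValuation S) → Option (Fin n → CAValuation S))
    (ohat : CAAllocation S n)
    (hmem : ohat = ktil w ∨
      ∃ (j : Fin n) (w' : Fin n → CAValuation S), l j w = some w' ∧ ohat = ktil w')
    (hmax : ∀ o : CAAllocation S n,
      (o = ktil w ∨
        ∃ (j : Fin n) (w' : Fin n → CAValuation S), l j w = some w' ∧ o = ktil w') →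
      welfare w o ≤ welfare w ohat) :
    vi.val (ohat.1 i) +
      ((∑ j ∈ Finset.univ.erase i, (w j).val (ohat.1 j)) +
        -(welfare (Function.update w i (zeroVal S))
            (k (Function.update w i (zeroVal S))))) ≥ 0 :=
  stmt_17_general k ktil hktil i vi w hw l ohat hmax
end
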